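/- Let T be an r-domino tableau, let A be a domino corner of sh(T) with A not contained in the first row (when A is horizontal) nor in the first column (when A is vertical), and let A′ denote the domino cell that is pushed back by A in the first step of the reverse insertion T^{↑A}. If A = {(i,j),(i,j+1)} is horizontal, then either A′ = {(i-1,j),(i,j)} or A′ ⊆ {(i-1,k) : k ≥ j}. If A = {(i,j),(i+1,j)} is vertical, then either A′ = {(i,j-1),(i,j)} or A′ ⊆ {(k,j-1) : k ≥ i}. -/

import Mathlib

/-! ## Cells, dominoes, shapes -/

/-- A cell in the plane, 1-indexed `(row, column)`.  Row `0` / column `0` serve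
as the north/west boundary. -/
abbrev Cell : Type := ℕ × ℕ

/-- A domino: the position of its top-left cell together with its orientation. -/
structure Domino where
  row : ℕ
  col : ℕ
  horiz : Bool
deriving DecidableEq

/-- The two cells occupied by a domino. -/
def Domino.cells (d : Domino) : Set Cell :=
  if d.horiz then {(d.row, d.col), (d.row, d.col + 1)}
  else {(d.row, d.col), (d.row + 1, d.col)}

/-- The staircase shape `δ_r = (r, r-1, …, 2, 1)`. -/
def staircase (r : ℕ) : Set Cell := {c | 1 ≤ c.1 ∧ 1 ≤ c.2 ∧ c.1 + c.2 ≤ r + 1}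

/-- Young-diagram (partition) shapes, 1-indexed: sets of cells with positive
coordinates that are downward closed in both coordinates. -/
def IsShape (s : Set Cell) : Prop :=
  (∀ c ∈ s, 1 ≤ c.1 ∧ 1 ≤ c.2) ∧
  ∀ i j i' j' : ℕ, (i, j) ∈ s → 1 ≤ i' → 1 ≤ j' → i' ≤ i → j' ≤ j → (i', j') ∈ s

/-! ## Domino tableaux -/

/-- An `r`-domino tableau: a partial assignment of dominoes to labels
(the staircase `δ_r` is implicitly part of every such tableau). -/
structure DTab (r : ℕ) where
  dom : ℕ → Option Domino

/-- The set of labels of a tableau. -/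
def DTab.labels {r : ℕ} (T : DTab r) : Set ℕ := {a | (T.dom a).isSome}

/-- The cells of the domino labelled `a` (empty if `a` is not a label). -/
def DTab.dcells {r : ℕ} (T : DTab r) (a : ℕ) : Set Cell :=
  match T.dom a with
  | some d => d.cells
  | none => ∅

/-- The underlying cell set (shape) of the tableau, including the staircase. -/
def DTab.cells {r : ℕ} (T : DTab r) : Set Cell := staircase r ∪ ⋃ a, T.dcells a

/-- Restriction of a tableau to labels `≤ a`. -/
def DTab.restrictLE {r : ℕ} (T : DTab r) (a : ℕ) : DTab r :=
  ⟨fun x => if x ≤ a then T.dom x else none⟩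

/-- Restriction of a tableau to labels `< a`. -/
def DTab.restrictLT {r : ℕ} (T : DTab r) (a : ℕ) : DTab r :=
  ⟨fun x => if x < a then T.dom x else none⟩

/-- Restriction of a tableau to labels `> a`. -/
def DTab.restrictGT {r : ℕ} (T : DTab r) (a : ℕ) : DTab r :=
  ⟨fun x => if a < x then T.dom x else none⟩

/-- Validity of an `r`-domino tableau: finitely many positive labels, pairwise
disjoint dominoes avoiding the staircase, and every restriction to labels
`≤ a` has a partition shape (this encodes that labels increase along rows and
down columns and that the whole diagram is a skew shape `λ/δ_r`). -/
def DTab.Valid {r : ℕ} (T : DTab r) : Prop :=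
  T.labels.Finite ∧ (∀ a ∈ T.labels, 0 < a) ∧
  (∀ a b : ℕ, a ≠ b → Disjoint (T.dcells a) (T.dcells b)) ∧
  (∀ a : ℕ, Disjoint (staircase r) (T.dcells a)) ∧
  (∀ a : ℕ, IsShape (T.restrictLE a).cells)

/-- A standard `r`-domino tableau with `n` dominoes: labels exactly `1, …, n`. -/
def DTab.Standard {r : ℕ} (T : DTab r) (n : ℕ) : Prop :=
  T.Valid ∧ T.labels = Set.Icc 1 n

/-- The first free column of row `i` (the "right end" of row `i`). -/
noncomputable def rowEnd (s : Set Cell) (i : ℕ) : ℕ := sInf {c : ℕ | 1 ≤ c ∧ (i, c) ∉ s}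

/-- The first free row of column `j` (the "bottom end" of column `j`). -/
noncomputable def colEnd (s : Set Cell) (j : ℕ) : ℕ := sInf {c : ℕ | 1 ≤ c ∧ (c, j) ∉ s}

/-- Put the domino `d` at label `a`. -/
def DTab.add {r : ℕ} (T : DTab r) (a : ℕ) (d : Domino) : DTab r :=
  ⟨Function.update T.dom a (some d)⟩

/-- `⊕` : union of two (skew) domino tableaux on disjoint label/cell sets. -/
def DTab.oplus {r : ℕ} (T T' : DTab r) : DTab r :=
  ⟨fun a => match T.dom a with
            | some d => some d
            | none => T'.dom a⟩

/-- A domino cell `d` is a domino corner of the shape `s` if its cells lie in `s`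
and removing them leaves a shape. -/
def IsDominoCorner (s : Set Cell) (d : Domino) : Prop :=
  d.cells ⊆ s ∧ IsShape (s \ d.cells)

/-- A cell `c` is a corner of the shape `s` if removing it leaves a shape. -/
def IsCellCorner (s : Set Cell) (c : Cell) : Prop :=
  c ∈ s ∧ IsShape (s \ {c})

/-! ## Garfinkle insertion -/

/-- One step of Garfinkle's sliding procedure: the state is the tableau `S`
built so far together with the excess cell set `B` (the domino cell by which
the shape of `S` exceeds the shape of the corresponding restriction of the
original tableau); the domino `d`, labelled `b`, of the original tableau is
re-inserted. -/
inductive SlideStep {r : ℕ} : DTab r → Set Cell → ℕ → Domino → DTab r → Set Cell → Prop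
  | disjoint (S : DTab r) (B : Set Cell) (b : ℕ) (d : Domino) :
      Disjoint d.cells B → SlideStep S B b d (S.add b d) B
  | bumpH (S : DTab r) (B : Set Cell) (b : ℕ) (d e : Domino) :
      d.cells = B → d.horiz = true →
      e = ⟨d.row + 1, rowEnd S.cells (d.row + 1), true⟩ →
      SlideStep S B b d (S.add b e) e.cells
  | bumpV (S : DTab r) (B : Set Cell) (b : ℕ) (d e : Domino) :
      d.cells = B → d.horiz = false →
      e = ⟨colEnd S.cells (d.col + 1), d.col + 1, false⟩ →
      SlideStep S B b d (S.add b e) e.cells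
  | rotH (S : DTab r) (B : Set Cell) (b : ℕ) (d e : Domino) :
      d.horiz = true → d.cells ∩ B = {(d.row, d.col)} →
      e = ⟨d.row, d.col + 1, false⟩ →
      SlideStep S B b d (S.add b e) ((B ∪ e.cells) \ d.cells)
  | rotV (S : DTab r) (B : Set Cell) (b : ℕ) (d e : Domino) :
      d.horiz = false → d.cells ∩ B = {(d.row, d.col)} →
      e = ⟨d.row + 1, d.col, true⟩ →
      SlideStep S B b d (S.add b e) ((B ∪ e.cells) \ d.cells)

/-- Sliding a list of labels (taken from the original tableau `T`) through the
current state. -/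
inductive SlideRun {r : ℕ} (T : DTab r) : DTab r → Set Cell → List ℕ → DTab r → Prop
  | nil (S : DTab r) (B : Set Cell) : SlideRun T S B [] S
  | cons (S : DTab r) (B : Set Cell) (b : ℕ) (bs : List ℕ) (d : Domino)
      (S' : DTab r) (B' : Set Cell) (S'' : DTab r) :
      T.dom b = some d → SlideStep S B b d S' B' → SlideRun T S' B' bs S'' →
      SlideRun T S B (b :: bs) S''

/-- Garfinkle's insertion of a nonzero integer `a` (with `|a|` not among the
labels of `T`) into the `r`-domino tableau `T`, producing `T'` (i.e.
`T' = T^{↓a}`): append a horizontal domino labelled `|a|` at the right end of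
the first row of `T_{<|a|}` if `a > 0` (a vertical domino at the bottom of the
first column if `a < 0`), then slide the dominoes of `T` with labels `> |a|`
through, in increasing order of label. -/
def GInsert {r : ℕ} (T : DTab r) (a : ℤ) (T' : DTab r) : Prop :=
  a ≠ 0 ∧ a.natAbs ∉ T.labels ∧
  ∃ (d₀ : Domino) (bs : List ℕ),
    ((0 < a ∧ d₀ = ⟨1, rowEnd (T.restrictLT a.natAbs).cells 1, true⟩) ∨
     (a < 0 ∧ d₀ = ⟨colEnd (T.restrictLT a.natAbs).cells 1, 1, false⟩)) ∧
    bs.Pairwise (· < ·) ∧ (∀ b : ℕ, b ∈ bs ↔ b ∈ T.labels ∧ a.natAbs < b) ∧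
    SlideRun T ((T.restrictLT a.natAbs).add a.natAbs d₀) d₀.cells bs T'

/-- Successive Garfinkle insertion of a word of integers, starting from `T`. -/
inductive InsFrom {r : ℕ} : DTab r → List ℤ → DTab r → Prop
  | nil (T : DTab r) : InsFrom T [] T
  | cons (T T₁ T' : DTab r) (a : ℤ) (w : List ℤ) :
      GInsert T a T₁ → InsFrom T₁ w T' → InsFrom T (a :: w) T'

/-- The empty `r`-domino tableau. -/
def emptyTab (r : ℕ) : DTab r := ⟨fun _ => none⟩

/-- `PIns r w T` : `T` is the insertion `r`-domino tableau `P^r(w)` of the word `w`. -/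
def PIns (r : ℕ) (w : List ℤ) (T : DTab r) : Prop := InsFrom (emptyTab r) w T

/-- Insertion together with the recording tableau: `k` is the label to be used
for the next recorded domino. -/
inductive InsRecFrom {r : ℕ} : DTab r → DTab r → ℕ → List ℤ → DTab r → DTab r → Prop
  | nil (P Q : DTab r) (k : ℕ) : InsRecFrom P Q k [] P Q
  | cons (P Q P₁ P' Q' : DTab r) (k : ℕ) (a : ℤ) (w : List ℤ) (d : Domino) :
      GInsert P a P₁ → d.cells = P₁.cells \ P.cells →
      InsRecFrom P₁ (Q.add k d) (k + 1) w P' Q' →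
      InsRecFrom P Q k (a :: w) P' Q'

/-- `PQIns r w P Q` : `P = P^r(w)` and `Q = Q^r(w)` are the insertion and
recording `r`-domino tableaux of the word `w`. -/
def PQIns (r : ℕ) (w : List ℤ) (P Q : DTab r) : Prop :=
  InsRecFrom (emptyTab r) (emptyTab r) 1 w P Q

/-! ## Reverse insertion -/

/-- `RevIns T A T' a` : reverse insertion of the domino corner `A` from `T`
produces the tableau `T' = T^{↑A}` and bumps out the signed integer
`a = η(T^{↑A})`; it is characterized by `T'^{↓a} = T` with the new domino cell
being `A`. -/
def RevIns {r : ℕ} (T : DTab r) (A : Domino) (T' : DTab r) (a : ℤ) : Prop :=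
  GInsert T' a T ∧ T.cells \ T'.cells = A.cells

/-! ## Extended labels, fixed/variable cells, cycles -/

/-- The extended label of a cell: `0` on the staircase and on the north/west
boundary, the label of the covering domino on the tableau, and `∞` elsewhere. -/
noncomputable def extLabel {r : ℕ} (T : DTab r) (c : Cell) : ℕ∞ :=
  haveI : ∀ p : Prop, Decidable p := fun p => Classical.propDecidable p
  if c.1 = 0 ∨ c.2 = 0 ∨ c ∈ staircase r then 0
  else if h : ∃ a : ℕ, c ∈ T.dcells a then (h.choose : ℕ∞) else ⊤

/-- A fixed cell: `i + j` and `r` have the same parity. -/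
def FixedCell (r : ℕ) (c : Cell) : Prop := (c.1 + c.2) % 2 = r % 2

/-- A variable cell: `i + j` and `r + 1` have the same parity. -/
def VariableCell (r : ℕ) (c : Cell) : Prop := (c.1 + c.2) % 2 = (r + 1) % 2

/-- Garfinkle's map `ψ` on a domino `d` with label `a` in the tableau `T`:
the image domino through the fixed cell of `d`. -/
noncomputable def psiDom {r : ℕ} (T : DTab r) (a : ℕ) (d : Domino) : Domino :=
  haveI : ∀ p : Prop, Decidable p := fun p => Classical.propDecidable p
  if d.horiz then
    if FixedCell r (d.row, d.col) then
      -- d = {(i,j),(i,j+1)} with (i,j) fixed; x = label at (i+1, j-1)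
      if (a : ℕ∞) > extLabel T (d.row + 1, d.col - 1) then ⟨d.row, d.col, false⟩
      else ⟨d.row, d.col - 1, true⟩
    else
      -- d = {(i,j-1),(i,j)} with (i,j) = (d.row, d.col+1) fixed; x = label at (i-1, j+1)
      if (a : ℕ∞) > extLabel T (d.row - 1, d.col + 2) then ⟨d.row, d.col + 1, true⟩
      else ⟨d.row - 1, d.col + 1, false⟩
  else
    if FixedCell r (d.row, d.col) then
      -- d = {(i,j),(i+1,j)} with (i,j) fixed; x = label at (i-1, j+1)
      if (a : ℕ∞) > extLabel T (d.row - 1, d.col + 1) then ⟨d.row, d.col, true⟩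
      else ⟨d.row - 1, d.col, false⟩
    else
      -- d = {(i-1,j),(i,j)} with (i,j) = (d.row+1, d.col) fixed; x = label at (i+1, j-1)
      if (a : ℕ∞) > extLabel T (d.row + 2, d.col - 1) then ⟨d.row + 1, d.col, false⟩
      else ⟨d.row + 1, d.col - 1, true⟩

/-- A cycle of `T`, encoded as the list of labels of its dominoes `A_0, …, A_k`:
a nonempty sequence of pairwise distinct dominoes of `T` such that `ψ(A_i)`
meets `A_{i+1}`, `ψ(A_k)` meets no domino of `T` outside the cycle, and the
sequence is maximal (no domino of `T` outside the cycle is mapped by `ψ` onto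
`A_0`). -/
def IsCycle {r : ℕ} (T : DTab r) (ls : List ℕ) : Prop :=
  ls ≠ [] ∧ ls.Nodup ∧ (∀ a ∈ ls, a ∈ T.labels) ∧
  ls.Chain' (fun a b => ∃ d, T.dom a = some d ∧
    ((psiDom T a d).cells ∩ T.dcells b).Nonempty) ∧
  (∀ la d, ls.getLast? = some la → T.dom la = some d →
    ∀ b ∈ T.labels, b ∉ ls → Disjoint (psiDom T la d).cells (T.dcells b)) ∧
  (∀ hd, ls.head? = some hd → ∀ b ∈ T.labels, b ∉ ls →
    ∀ d, T.dom b = some d → Disjoint (psiDom T b d).cells (T.dcells hd))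

/-- An open cycle: the cells of `ψ(A_k)` do not meet the cells of `A_0`. -/
def IsOpenCycle {r : ℕ} (T : DTab r) (ls : List ℕ) : Prop :=
  IsCycle T ls ∧
  ∀ la d hd, ls.getLast? = some la → T.dom la = some d → ls.head? = some hd →
    Disjoint (psiDom T la d).cells (T.dcells hd)

/-- `Ψ_C(T)` : move the cycle with label list `ls`, replacing each of its
dominoes `A_i` by `ψ(A_i)`. -/
noncomputable def applyCycle {r : ℕ} (T : DTab r) (ls : List ℕ) : DTab r :=
  ⟨fun a => if a ∈ ls then (T.dom a).map (psiDom T a) else T.dom a⟩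

/-- `S ~C~ T` : cycle equivalence of two tableaux with the same label set:
`S = T`, or `T` is obtained from `S` by moving a set of (pairwise disjoint)
open cycles of `S`. -/
def TabCycleEquiv {r : ℕ} (S T : DTab r) : Prop :=
  S = T ∨ ∃ lss : List (List ℕ), (∀ ls ∈ lss, IsOpenCycle S ls) ∧
    lss.Pairwise (fun l₁ l₂ => ∀ a ∈ l₁, a ∉ l₂) ∧
    T = applyCycle S lss.flatten

/-- Cycle equivalence through exactly `t` open cycles. -/
def TabCycleEquivN {r : ℕ} (S T : DTab r) (t : ℕ) : Prop :=
  ∃ lss : List (List ℕ), lss.length = t ∧ (∀ ls ∈ lss, IsOpenCycle S ls) ∧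
    lss.Pairwise (fun l₁ l₂ => ∀ a ∈ l₁, a ∉ l₂) ∧
    T = applyCycle S lss.flatten

/-! ## Signed permutations -/

/-- A signed permutation in `B_n`, realized as a permutation `π` of `ℤ`
satisfying `π(-x) = -π(x)` and fixing every integer of absolute value `> n`. -/
def IsBn (n : ℕ) (π : Equiv.Perm ℤ) : Prop :=
  (∀ x : ℤ, π (-x) = -(π x)) ∧ ∀ x : ℤ, (n : ℤ) < |x| → π x = x

/-- The window notation `α_1 ⋯ α_n` of a signed permutation. -/
def window (n : ℕ) (π : Equiv.Perm ℤ) : List ℤ :=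
  List.ofFn (fun i : Fin n => π ((i : ℕ) + 1))

/-- The Coxeter generators of `B_n`: `s_0 = (-1,1)` and
`s_i = (i, i+1)(-i, -(i+1))` for `i ≥ 1`. -/
def sGen (i : ℕ) : Equiv.Perm ℤ :=
  if i = 0 then Equiv.swap (1 : ℤ) (-1)
  else Equiv.swap (i : ℤ) ((i : ℤ) + 1) * Equiv.swap (-(i : ℤ)) (-((i : ℤ) + 1))

/-- The Coxeter length of an element of `B_n` with respect to
`{s_0, s_1, …, s_{n-1}}`. -/
noncomputable def lenB (n : ℕ) (π : Equiv.Perm ℤ) : ℕ :=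
  sInf {k | ∃ l : List (Equiv.Perm ℤ), l.length = k ∧
    (∀ g ∈ l, ∃ i : ℕ, i ≤ n - 1 ∧ g = sGen i) ∧ l.prod = π}

/-- The left descent set `Des_L(α) = {i : 0 ≤ i ≤ n-1, ℓ(s_i α) < ℓ(α)}`. -/
def DesL (n : ℕ) (π : Equiv.Perm ℤ) : Set ℕ :=
  {i | i ≤ n - 1 ∧ lenB n (sGen i * π) < lenB n π}

/-- The domino labelled `a` lies strictly below the domino labelled `b`... here:
every cell of the domino labelled `b` is in a strictly larger row than every
cell of the domino labelled `a`. -/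
def DominoBelow {r : ℕ} (T : DTab r) (a b : ℕ) : Prop :=
  ∀ c ∈ T.dcells a, ∀ c' ∈ T.dcells b, c.1 < c'.1

/-- The domino labelled `b` lies strictly to the right of the domino labelled `a`. -/
def DominoRight {r : ℕ} (T : DTab r) (a b : ℕ) : Prop :=
  ∀ c ∈ T.dcells a, ∀ c' ∈ T.dcells b, c.2 < c'.2

/-- The descent set of a standard `r`-domino tableau with `n` dominoes. -/
def DesT {r : ℕ} (T : DTab r) (n : ℕ) : Set ℕ :=
  {i | (1 ≤ i ∧ i ≤ n - 1 ∧ DominoBelow T i (i + 1)) ∨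
       (i = 0 ∧ ∃ d : Domino, T.dom 1 = some d ∧ d.horiz = false)}

/-! ## Plactic relations -/

/-- A positive (strictly) decreasing sequence. -/
def PosDec (p : List ℤ) : Prop := p.Chain' (· > ·) ∧ ∀ x ∈ p, 0 < x

/-- A negative (strictly) increasing sequence. -/
def NegInc (q : List ℤ) : Prop := q.Chain' (· < ·) ∧ ∀ x ∈ q, x < 0

/-- `IsShuffle p q w` : `w` is a shuffle (interleaving) of `p` and `q`. -/
inductive IsShuffle : List ℤ → List ℤ → List ℤ → Prop
  | nil : IsShuffle [] [] []
  | left {a : ℤ} {as bs cs : List ℤ} : IsShuffle as bs cs → IsShuffle (a :: as) bs (a :: cs)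
  | right {b : ℤ} {as bs cs : List ℤ} : IsShuffle as bs cs → IsShuffle as (b :: bs) (b :: cs)

/-- The relation `D_1^r` : if `α_i < α_{i+2} < α_{i+1}` or
`α_i < α_{i-1} < α_{i+1}`, interchange `α_i` and `α_{i+1}`. -/
def D1Rel (w w' : List ℤ) : Prop :=
  ∃ (u : List ℤ) (x y : ℤ) (v : List ℤ),
    w = u ++ x :: y :: v ∧ w' = u ++ y :: x :: v ∧
    ((∃ z vs, v = z :: vs ∧ x < z ∧ z < y) ∨ (∃ us z, u = us ++ [z] ∧ x < z ∧ z < y))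

/-- The relation `D_2^r` : for some `0 < j ≤ r` with `α_j, α_{j+1}` of opposite
signs and `α_1 ⋯ α_j α_{j+1}` a shuffle of a positive decreasing and a negative
increasing sequence, one ending with `α_j` and the other with `α_{j+1}`,
interchange `α_j` and `α_{j+1}`. -/
def D2Rel (r : ℕ) (w w' : List ℤ) : Prop :=
  ∃ (u : List ℤ) (x y : ℤ) (v : List ℤ),
    w = u ++ x :: y :: v ∧ w' = u ++ y :: x :: v ∧
    u.length + 1 ≤ r ∧
    ((0 < x ∧ y < 0) ∨ (x < 0 ∧ 0 < y)) ∧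
    ∃ p q : List ℤ, PosDec p ∧ NegInc q ∧ IsShuffle p q (u ++ [x, y]) ∧
      ((p.getLast? = some x ∧ q.getLast? = some y) ∨
       (p.getLast? = some y ∧ q.getLast? = some x))

/-- The relation `D_3^r` : if `|α_1| > |α_i|` for all `2 ≤ i ≤ r+2` and
`α_2 ⋯ α_{r+2}` is a shuffle of a positive decreasing and a negative increasing
sequence, replace `α_1` by `-α_1`. -/
def D3Rel (r : ℕ) (w w' : List ℤ) : Prop :=
  ∃ (x : ℤ) (t : List ℤ),
    w = x :: t ∧ w' = (-x) :: t ∧ r + 1 ≤ t.length ∧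
    (∀ z ∈ t.take (r + 1), z.natAbs < x.natAbs) ∧
    ∃ p q : List ℤ, PosDec p ∧ NegInc q ∧ IsShuffle p q (t.take (r + 1))

/-- A single `D_1^r`, `D_2^r` or `D_3^r` move. -/
def PlacticRel (r : ℕ) (w w' : List ℤ) : Prop :=
  D1Rel w w' ∨ D2Rel r w w' ∨ D3Rel r w w'

/-- `r`-plactic equivalence : the equivalence generated by
`D_1^r, D_2^r, D_3^r`. -/
def PlacticEquiv (r : ℕ) : List ℤ → List ℤ → Prop :=
  Relation.EqvGen (PlacticRel r)

/-- A single `D_1^r`, `D_2^r`, `D_3^r` or `D_3^{r-1}` move. -/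
def CycleRelW (r : ℕ) (w w' : List ℤ) : Prop :=
  PlacticRel r w w' ∨ D3Rel (r - 1) w w'

/-- `r`-cycle equivalence : the equivalence generated by
`D_1^r, D_2^r, D_3^r, D_3^{r-1}`. -/
def CycleEquivW (r : ℕ) : List ℤ → List ℤ → Prop :=
  Relation.EqvGen (CycleRelW r)

/-! ## The maps `V_{i,j}` -/

/-- Interchange the labels `a` and `b` of a tableau. -/
def swapLabels {r : ℕ} (T : DTab r) (a b : ℕ) : DTab r :=
  ⟨fun x => if x = a then T.dom b else if x = b then T.dom a else T.dom x⟩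

/-- Update the domino at label `a`. -/
def DTab.upd {r : ℕ} (T : DTab r) (a : ℕ) (d : Domino) : DTab r :=
  ⟨Function.update T.dom a (some d)⟩

/-- The map `V_{i,i+1}` on tableaux (forward direction). -/
def VFwd {r : ℕ} (i : ℕ) (T T' : DTab r) : Prop :=
  ∃ di di1 di2 : Domino,
    T.dom i = some di ∧ T.dom (i + 1) = some di1 ∧ T.dom (i + 2) = some di2 ∧
    ((DominoBelow T i (i + 2) ∧
      ((∃ k l : ℕ, di = ⟨k, l, true⟩ ∧ di1 = ⟨k + 1, l, false⟩ ∧ di2 = ⟨k + 1, l + 1, false⟩ ∧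
          T' = ((T.upd i ⟨k, l, false⟩).upd (i + 1) ⟨k, l + 1, false⟩).upd (i + 2)
                  ⟨k + 2, l, true⟩) ∨
       ((¬ ∃ k l : ℕ, di = ⟨k, l, true⟩ ∧ di1 = ⟨k + 1, l, false⟩ ∧ di2 = ⟨k + 1, l + 1, false⟩) ∧
          T' = swapLabels T i (i + 1)))) ∨
     (DominoRight T i (i + 2) ∧
      ((∃ k l : ℕ, di = ⟨k, l, true⟩ ∧ di1 = ⟨k + 1, l, true⟩ ∧ di2 = ⟨k, l + 2, false⟩ ∧
          T' = ((T.upd i ⟨k, l, false⟩).upd (i + 1) ⟨k, l + 1, true⟩).upd (i + 2)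
                  ⟨k + 1, l + 1, true⟩) ∨
       ((¬ ∃ k l : ℕ, di = ⟨k, l, true⟩ ∧ di1 = ⟨k + 1, l, true⟩ ∧ di2 = ⟨k, l + 2, false⟩) ∧
          T' = swapLabels T (i + 1) (i + 2)))))

/-- The map `V_{i,j}` on tableaux, for consecutive `i, j`
(`V_{i+1,i}` is the inverse of `V_{i,i+1}`). -/
def VTabRel (r i j : ℕ) (T T' : DTab r) : Prop :=
  (j = i + 1 ∧ @VFwd r i T T') ∨ (i = j + 1 ∧ @VFwd r j T' T)

/-- The map `V_{i,j}` on `B_n` : `V_{i,j}(α)` is the element of `{s_iα, s_jα}`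
lying in `D_{j,i}(B_n)`. -/
def VPerm (n i j : ℕ) (π π' : Equiv.Perm ℤ) : Prop :=
  (π' = sGen i * π ∨ π' = sGen j * π) ∧ j ∈ DesL n π' ∧ i ∉ DesL n π'

/-! ## The pushed-back domino cell in reverse insertion -/

/-- `PushedBack T A A'` : `A'` is the domino cell pushed back by the domino
corner `A` in the first step of the reverse insertion `T^{↑A}`. -/
def PushedBack {r : ℕ} (T : DTab r) (A : Domino) (A' : Set Cell) : Prop :=
  (A.horiz = true ∧
    ((extLabel T (A.row, A.col) = extLabel T (A.row, A.col + 1) ∧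
      ∃ j : ℕ, 1 ≤ j ∧ (A.row - 1, j) ∈ T.cells ∧
        extLabel T (A.row - 1, j) < extLabel T (A.row, A.col) ∧
        (∀ j' : ℕ, j < j' → extLabel T (A.row, A.col) ≤ extLabel T (A.row - 1, j')) ∧
        A' = {(A.row - 1, j - 1), (A.row - 1, j)}) ∨
     (extLabel T (A.row, A.col) < extLabel T (A.row, A.col + 1) ∧
        A' = {(A.row - 1, A.col), (A.row, A.col)}))) ∨
  (A.horiz = false ∧
    ((extLabel T (A.row, A.col) = extLabel T (A.row + 1, A.col) ∧
      ∃ i : ℕ, 1 ≤ i ∧ (i, A.col - 1) ∈ T.cells ∧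
        extLabel T (i, A.col - 1) < extLabel T (A.row, A.col) ∧
        (∀ i' : ℕ, i < i' → extLabel T (A.row, A.col) ≤ extLabel T (i', A.col - 1)) ∧
        A' = {(i - 1, A.col - 1), (i, A.col - 1)}) ∨
     (extLabel T (A.row, A.col) < extLabel T (A.row + 1, A.col) ∧
        A' = {(A.row, A.col - 1), (A.row, A.col)})))

/-!
A domino corner `A = {(i,j),(i,j+1)}` that pushes back a horizontal domino cell is a single
domino labelled `b`. The cell `(i-1,j+1)` directly above its right half is not part of that
domino, so its extended label is smaller than `b`, because the cells with labels `≤ b` form a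
shape. The pushed-back cell ends at the last column `k` of row `i-1` whose label is `< b`;
since column `j+1` already carries a label `< b`, we get `k > j`. The vertical case is the
transposed argument.
-/

namespace Domino

lemma row_eq_of_mem_cells {d : Domino} {i j : ℕ} (h₁ : (i, j) ∈ d.cells)
    (h₂ : (i, j + 1) ∈ d.cells) : ∀ c ∈ d.cells, c.1 = i := by
  rcases d with ⟨row, col, _ | _⟩ <;>
    simp only [cells, Bool.false_eq_true, if_true, if_false, Set.mem_insert_iff,
      Set.mem_singleton_iff, Prod.ext_iff] at h₁ h₂ ⊢ <;> omega

lemma col_eq_of_mem_cells {d : Domino} {i j : ℕ} (h₁ : (i, j) ∈ d.cells)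
    (h₂ : (i + 1, j) ∈ d.cells) : ∀ c ∈ d.cells, c.2 = j := by
  rcases d with ⟨row, col, _ | _⟩ <;>
    simp only [cells, Bool.false_eq_true, if_true, if_false, Set.mem_insert_iff,
      Set.mem_singleton_iff, Prod.ext_iff] at h₁ h₂ ⊢ <;> omega

end Domino

namespace DTab

variable {r : ℕ} {T : DTab r}

lemma exists_dom_eq_of_mem_dcells {a : ℕ} {c : Cell} (hc : c ∈ T.dcells a) :
    ∃ d, T.dom a = some d ∧ T.dcells a = d.cells := by
  unfold dcells at hc ⊢
  cases hd : T.dom a with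
  | none => simp [hd] at hc
  | some d => exact ⟨d, rfl, rfl⟩

lemma dcells_row_eq {b i j : ℕ} (h₁ : (i, j) ∈ T.dcells b) (h₂ : (i, j + 1) ∈ T.dcells b) :
    ∀ c ∈ T.dcells b, c.1 = i := by
  obtain ⟨d, -, hd⟩ := exists_dom_eq_of_mem_dcells h₁
  rw [hd] at h₁ h₂ ⊢
  exact Domino.row_eq_of_mem_cells h₁ h₂

lemma dcells_col_eq {b i j : ℕ} (h₁ : (i, j) ∈ T.dcells b) (h₂ : (i + 1, j) ∈ T.dcells b) :
    ∀ c ∈ T.dcells b, c.2 = j := by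
  obtain ⟨d, -, hd⟩ := exists_dom_eq_of_mem_dcells h₁
  rw [hd] at h₁ h₂ ⊢
  exact Domino.col_eq_of_mem_cells h₁ h₂

lemma restrictLE_dcells_of_le {a x : ℕ} (hx : x ≤ a) : (T.restrictLE a).dcells x = T.dcells x := by
  simp [dcells, restrictLE, hx]

lemma restrictLE_dcells_of_lt {a x : ℕ} (hx : a < x) : (T.restrictLE a).dcells x = ∅ := by
  simp [dcells, restrictLE, hx.not_ge]

lemma mem_restrictLE_cells_of_mem_dcells {a : ℕ} {c : Cell} (hc : c ∈ T.dcells a) :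
    c ∈ (T.restrictLE a).cells :=
  Or.inr (Set.mem_iUnion.2 ⟨a, by rwa [restrictLE_dcells_of_le le_rfl]⟩)

lemma extLabel_eq_zero {c : Cell} (hc : c.1 = 0 ∨ c.2 = 0 ∨ c ∈ staircase r) :
    extLabel T c = 0 := by
  unfold extLabel
  rw [if_pos hc]

namespace Valid

variable (hT : T.Valid)
include hT

lemma pos_of_mem_dcells {a : ℕ} {c : Cell} (hc : c ∈ T.dcells a) : 1 ≤ c.1 ∧ 1 ≤ c.2 :=
  (hT.2.2.2.2 a).1 c (mem_restrictLE_cells_of_mem_dcells hc)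

lemma label_pos {a : ℕ} {c : Cell} (hc : c ∈ T.dcells a) : 0 < a := by
  obtain ⟨d, hd, -⟩ := exists_dom_eq_of_mem_dcells hc
  exact hT.2.1 a (by simp [labels, hd])

lemma label_eq {a b : ℕ} {c : Cell} (ha : c ∈ T.dcells a) (hb : c ∈ T.dcells b) : a = b := by
  by_contra hne
  exact Set.disjoint_left.mp (hT.2.2.1 a b hne) ha hb

lemma extLabel_eq {a : ℕ} {c : Cell} (hc : c ∈ T.dcells a) : extLabel T c = a := by
  have hpos := hT.pos_of_mem_dcells hc
  have hs : c ∉ staircase r := fun hmem => Set.disjoint_left.mp (hT.2.2.2.1 a) hmem hc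
  have hex : ∃ x, c ∈ T.dcells x := ⟨a, hc⟩
  have hnot : ¬(c.1 = 0 ∨ c.2 = 0 ∨ c ∈ staircase r) := by
    rintro (h | h | h) <;> first | omega | exact hs h
  unfold extLabel
  rw [if_neg hnot, dif_pos hex, hT.label_eq hex.choose_spec hc]

lemma exists_mem_dcells_of_extLabel_pos {c : Cell} (hc : c ∈ T.cells)
    (hpos : 0 < extLabel T c) : ∃ b, c ∈ T.dcells b ∧ extLabel T c = b := by
  rcases hc with hs | hc
  · rw [extLabel_eq_zero (Or.inr (Or.inr hs))] at hpos
    exact absurd hpos (lt_irrefl 0)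
  · obtain ⟨b, hb⟩ := Set.mem_iUnion.mp hc
    exact ⟨b, hb, hT.extLabel_eq hb⟩

lemma extLabel_lt_of_le {b i j i' j' : ℕ} (hb : (i, j) ∈ T.dcells b) (hi : i' ≤ i)
    (hj : j' ≤ j) (hnb : (i', j') ∉ T.dcells b) : extLabel T (i', j') < b := by
  have hbpos : (0 : ℕ∞) < b := by exact_mod_cast hT.label_pos hb
  by_cases hzero : i' = 0 ∨ j' = 0
  · rwa [extLabel_eq_zero (by tauto)]
  have hmem : (i', j') ∈ (T.restrictLE b).cells :=
    (hT.2.2.2.2 b).2 i j i' j' (mem_restrictLE_cells_of_mem_dcells hb) (by omega) (by omega) hi hj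
  rcases hmem with hs | hcov
  · rwa [extLabel_eq_zero (Or.inr (Or.inr hs))]
  obtain ⟨x, hx⟩ := Set.mem_iUnion.mp hcov
  have hxb : x ≤ b := by
    by_contra hgt
    rw [restrictLE_dcells_of_lt (not_le.mp hgt)] at hx
    exact hx
  rw [restrictLE_dcells_of_le hxb] at hx
  rw [hT.extLabel_eq hx]
  exact_mod_cast lt_of_le_of_ne hxb (by rintro rfl; exact hnb hx)

lemma col_lt_of_last_smaller_above {i j k : ℕ} (h₁ : (i, j) ∈ T.cells) (h₂ : (i, j + 1) ∈ T.cells)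
    (heq : extLabel T (i, j) = extLabel T (i, j + 1))
    (hlt : extLabel T (i - 1, k) < extLabel T (i, j))
    (hge : ∀ k' : ℕ, k < k' → extLabel T (i, j) ≤ extLabel T (i - 1, k')) : j < k := by
  obtain ⟨b, hb₁, hlab⟩ := hT.exists_mem_dcells_of_extLabel_pos h₁ (pos_of_gt hlt)
  obtain ⟨b', hb₂, hlab'⟩ := hT.exists_mem_dcells_of_extLabel_pos h₂ (heq ▸ pos_of_gt hlt)
  rw [show b' = b by exact_mod_cast hlab'.symm.trans (heq.symm.trans hlab)] at hb₂
  have hi := (hT.pos_of_mem_dcells hb₁).1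
  have habove : (i - 1, j + 1) ∉ T.dcells b := fun h => by
    have := dcells_row_eq hb₁ hb₂ _ h
    omega
  by_contra! hkj
  have := hT.extLabel_lt_of_le hb₂ (Nat.sub_le i 1) le_rfl habove
  exact absurd (hlab ▸ hge (j + 1) (by omega)) this.not_ge

lemma row_lt_of_last_smaller_left {i j k : ℕ} (h₁ : (i, j) ∈ T.cells) (h₂ : (i + 1, j) ∈ T.cells)
    (heq : extLabel T (i, j) = extLabel T (i + 1, j))
    (hlt : extLabel T (k, j - 1) < extLabel T (i, j))
    (hge : ∀ k' : ℕ, k < k' → extLabel T (i, j) ≤ extLabel T (k', j - 1)) : i < k := by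
  obtain ⟨b, hb₁, hlab⟩ := hT.exists_mem_dcells_of_extLabel_pos h₁ (pos_of_gt hlt)
  obtain ⟨b', hb₂, hlab'⟩ := hT.exists_mem_dcells_of_extLabel_pos h₂ (heq ▸ pos_of_gt hlt)
  rw [show b' = b by exact_mod_cast hlab'.symm.trans (heq.symm.trans hlab)] at hb₂
  have hj := (hT.pos_of_mem_dcells hb₁).2
  have hleft : (i + 1, j - 1) ∉ T.dcells b := fun h => by
    have := dcells_col_eq hb₁ hb₂ _ h
    omega
  by_contra! hki
  have := hT.extLabel_lt_of_le hb₂ le_rfl (Nat.sub_le j 1) hleft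
  exact absurd (hlab ▸ hge (i + 1) (by omega)) this.not_ge

end Valid

end DTab

theorem pushedBack_position_general {r : ℕ} (T : DTab r) (hT : T.Valid) (A : Domino)
    (hA : IsDominoCorner T.cells A)
    (A' : Set Cell) (h : PushedBack T A A') :
    (A.horiz = true →
      A' = {(A.row - 1, A.col), (A.row, A.col)} ∨
        ∀ c ∈ A', c.1 = A.row - 1 ∧ A.col ≤ c.2) ∧
    (A.horiz = false →
      A' = {(A.row, A.col - 1), (A.row, A.col)} ∨
        ∀ c ∈ A', c.2 = A.col - 1 ∧ A.row ≤ c.1) := by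
  refine ⟨fun hh => ?_, fun hv => ?_⟩
  · rcases h with ⟨-, ⟨heq, k, -, -, hlt, hge, rfl⟩ | ⟨-, rfl⟩⟩ | ⟨hv, -⟩
    · have hjk := hT.col_lt_of_last_smaller_above (hA.1 (by simp [Domino.cells, hh]))
        (hA.1 (by simp [Domino.cells, hh])) heq hlt hge
      right
      rintro c (rfl | rfl) <;> omega
    · exact Or.inl rfl
    · simp [hh] at hv
  · rcases h with ⟨hh, -⟩ | ⟨-, ⟨heq, k, -, -, hlt, hge, rfl⟩ | ⟨-, rfl⟩⟩
    · simp [hv] at hh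
    · have hik := hT.row_lt_of_last_smaller_left (hA.1 (by simp [Domino.cells, hv]))
        (hA.1 (by simp [Domino.cells, hv])) heq hlt hge
      right
      rintro c (rfl | rfl) <;> omega
    · exact Or.inl rfl

/-- Corollary `reverse.insertion.cor1`: the position of the
domino cell `A'` pushed back by the domino corner `A` in the first step of the
reverse insertion `T^{↑A}`. -/
theorem pushedBack_position {r : ℕ} (T : DTab r) (hT : T.Valid) (A : Domino)
    (hA : IsDominoCorner T.cells A)
    (hrow : A.horiz = true → 2 ≤ A.row) (hcol : A.horiz = false → 2 ≤ A.col)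
    (A' : Set Cell) (h : PushedBack T A A') :
    (A.horiz = true →
      A' = {(A.row - 1, A.col), (A.row, A.col)} ∨
        ∀ c ∈ A', c.1 = A.row - 1 ∧ A.col ≤ c.2) ∧
    (A.horiz = false →
      A' = {(A.row, A.col - 1), (A.row, A.col)} ∨
        ∀ c ∈ A', c.2 = A.col - 1 ∧ A.row ≤ c.1) :=
  pushedBack_position_general T hT A hA A' h
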